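/- arXiv:2101.12476 — 5 statements merged into one kernel-verified Lean document; each statement's English description precedes it below -/
import Mathlib

section
/- Theorem (no proxy discrimination for mean-adjusted predictors). Let (Ω, 𝔉, ℙ) be a probability space, E a measurable space, T : Ω → E measurable, g : E → ℝ measurable with g∘T integrable with respect to ℙ, μ_X ∈ ℝ, and r : ℝ → ℝ Borel measurable. For p ∈ ℝ let X_p := (fun ω => g(T ω) + μ_X·p) be the feature under the intervention do(P = p). Then 𝔼[X_p] = 𝔼[g∘T] + μ_X·p, and for all p, p' ∈ ℝ the pushforward measure of ℙ under ω ↦ r(X_p(ω) − 𝔼[X_p]) equals the pushforward measure of ℙ under ω ↦ r(X_{p'}(ω) − 𝔼[X_{p'}]); that is, the predictor Ŷ = r(X − 𝔼[X | do(P)]) exhibits no proxy discrimination. -/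
open MeasureTheory

section CenteringShift

variable {Ω F : Type*} [MeasurableSpace Ω] {μ : Measure Ω} [IsProbabilityMeasure μ]
  [NormedAddCommGroup F] [NormedSpace ℝ F] [CompleteSpace F] {f : Ω → F}

theorem integral_add_const_of_integrable (hf : Integrable f μ) (c : F) :
    ∫ ω, (f ω + c) ∂μ = ∫ ω, f ω ∂μ + c := by
  rw [integral_add hf (integrable_const c), integral_const, probReal_univ, one_smul]

theorem add_const_sub_integral_add_const (hf : Integrable f μ) (c : F) (ω : Ω) :
    f ω + c - ∫ ω', (f ω' + c) ∂μ = f ω - ∫ ω', f ω' ∂μ := by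
  rw [integral_add_const_of_integrable hf, add_sub_add_right_eq_sub]

theorem map_comp_sub_integral_add_const {G : Type*} [MeasurableSpace G] (hf : Integrable f μ)
    (r : F → G) (c : F) :
    μ.map (fun ω => r (f ω + c - ∫ ω', (f ω' + c) ∂μ)) =
      μ.map (fun ω => r (f ω - ∫ ω', f ω' ∂μ)) := by
  simp only [add_const_sub_integral_add_const hf]

end CenteringShift

theorem no_proxy_discrimination_mean_adjusted_general
    {Ω E : Type*} [MeasurableSpace Ω] [MeasurableSpace E]
    (μ : Measure Ω) [IsProbabilityMeasure μ]
    (T : Ω → E)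
    (g : E → ℝ)
    (hInt : Integrable (fun ω => g (T ω)) μ)
    (μX : ℝ) (r : ℝ → ℝ) :
    (∀ p : ℝ, ∫ ω, (g (T ω) + μX * p) ∂μ = (∫ ω, g (T ω) ∂μ) + μX * p) ∧
    (∀ p p' : ℝ,
      Measure.map
        (fun ω => r ((g (T ω) + μX * p) - ∫ ω', (g (T ω') + μX * p) ∂μ)) μ =
      Measure.map
        (fun ω => r ((g (T ω) + μX * p') - ∫ ω', (g (T ω') + μX * p') ∂μ)) μ) :=
  ⟨fun p => integral_add_const_of_integrable hInt (μX * p), fun p p' => by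
    rw [map_comp_sub_integral_add_const hInt r, map_comp_sub_integral_add_const hInt r]⟩

/-- No proxy discrimination for mean-adjusted predictors (Theorem 4.6, Chapter 4).
Under the intervention `do(P = p)` the feature is `X_p = g ∘ T + μ_X · p`; then
`𝔼[X_p] = 𝔼[g ∘ T] + μ_X · p`, and the law of `r (X_p − 𝔼[X_p])` does not depend on `p`. -/
theorem no_proxy_discrimination_mean_adjusted
    {Ω E : Type*} [MeasurableSpace Ω] [MeasurableSpace E]
    (μ : Measure Ω) [IsProbabilityMeasure μ]
    (T : Ω → E) (hT : Measurable T)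
    (g : E → ℝ) (hg : Measurable g)
    (hInt : Integrable (fun ω => g (T ω)) μ)
    (μX : ℝ) (r : ℝ → ℝ) (hr : Measurable r) :
    (∀ p : ℝ, ∫ ω, (g (T ω) + μX * p) ∂μ = (∫ ω, g (T ω) ∂μ) + μX * p) ∧
    (∀ p p' : ℝ,
      Measure.map
        (fun ω => r ((g (T ω) + μX * p) - ∫ ω', (g (T ω') + μX * p) ∂μ)) μ =
      Measure.map
        (fun ω => r ((g (T ω) + μX * p') - ∫ ω', (g (T ω') + μX * p') ∂μ)) μ) :=
  no_proxy_discrimination_mean_adjusted_general μ T g hInt μX r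
end

section
/- Theorem (characterization of proxy-discrimination-free predictors, core step). Let (Ω, 𝔉, ℙ) be a probability space, W : Ω → ℝ a random variable, h : ℝ → ℝ strictly monotone, and μ ∈ ℝ. If there exist p ≠ p' in ℝ such that the pushforward measure of ℙ under ω ↦ h(W(ω) + μ·p) equals the pushforward measure of ℙ under ω ↦ h(W(ω) + μ·p'), then μ = 0. Consequently, in the additive–linear model where the predictor under do(P = p) equals h(g(T) + μ_Ŷ·p), avoiding proxy discrimination forces μ_Ŷ = 0, i.e. the predictor is a function of X − 𝔼[X | do(P)]. -/
/-!
A strictly monotone `h : ℝ → ℝ` is a measurable embedding, so it can be stripped from both laws: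
the law of `W` is then invariant under translation by `μY * (p - p')`. Hence the distribution
function of `W` is periodic with that period; since it tends to `0` at `-∞` and to `1` at `+∞`,
the period must vanish.
-/

open MeasureTheory Filter Topology ProbabilityTheory Set

namespace Function.Periodic

variable {𝕜 α : Type*} [Field 𝕜] [LinearOrder 𝕜] [IsStrictOrderedRing 𝕜] [Archimedean 𝕜]
  [TopologicalSpace α] [T2Space α] {f : 𝕜 → α} {c : 𝕜} {L : α}

theorem eq_of_tendsto_atTop (hf : Periodic f c) (hc : c ≠ 0) (hL : Tendsto f atTop (𝓝 L))
    (x : 𝕜) : f x = L := by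
  wlog hc_pos : 0 < c generalizing c
  · exact this hf.neg (neg_ne_zero.mpr hc) (neg_pos.mpr ((not_lt.mp hc_pos).lt_of_ne hc))
  have hshift : Tendsto (fun n : ℕ => x + n * c) atTop atTop :=
    tendsto_atTop_add_const_left _ _ (tendsto_natCast_atTop_atTop.atTop_mul_const hc_pos)
  refine tendsto_nhds_unique tendsto_const_nhds ((hL.comp hshift).congr fun n => ?_)
  exact (hf.nat_mul n) x

theorem eq_of_tendsto_atBot (hf : Periodic f c) (hc : c ≠ 0) (hL : Tendsto f atBot (𝓝 L))
    (x : 𝕜) : f x = L := by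
  have hneg : Periodic (fun y => f (-y)) c := fun y => by
    simp only [neg_add_rev, neg_add_eq_sub, hf.sub_eq]
  simpa using hneg.eq_of_tendsto_atTop hc (hL.comp tendsto_neg_atTop_atBot) (-x)

end Function.Periodic

theorem eq_of_map_add_const_eq {ν : Measure ℝ} [IsProbabilityMeasure ν] {a b : ℝ}
    (h : ν.map (· + a) = ν.map (· + b)) : a = b := by
  have hshift (t x : ℝ) : (ν.map (· + t)).real (Iic x) = cdf ν (x - t) := by
    rw [map_measureReal_apply (measurable_add_const t) measurableSet_Iic, cdf_eq_real]
    congr 1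
    ext y
    simp [le_sub_iff_add_le]
  have hper : Function.Periodic (cdf ν) (a - b) := fun x => calc
    cdf ν (x + (a - b)) = (ν.map (· + b)).real (Iic (x + a)) := by rw [hshift]; ring_nf
    _ = (ν.map (· + a)).real (Iic (x + a)) := by rw [h]
    _ = cdf ν x := by rw [hshift, add_sub_cancel_right]
  by_contra hab
  have h1 := hper.eq_of_tendsto_atTop (sub_ne_zero.mpr hab) (tendsto_cdf_atTop ν) 0
  have h0 := hper.eq_of_tendsto_atBot (sub_ne_zero.mpr hab) (tendsto_cdf_atBot ν) 0
  exact one_ne_zero (h1.symm.trans h0)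

/-- Characterization of proxy-discrimination-free predictors, core step (Theorem 4.11,
Chapter 4). If `h` is strictly monotone and the laws of `h (W + μ·p)` and `h (W + μ·p')`
agree for some `p ≠ p'`, then `μ = 0`. -/
theorem proxy_free_predictor_forces_zero_coefficient
    {Ω : Type*} [MeasurableSpace Ω] (μ : Measure Ω) [IsProbabilityMeasure μ]
    (W : Ω → ℝ) (hW : Measurable W)
    (h : ℝ → ℝ) (hmono : StrictMono h ∨ StrictAnti h)
    (μY : ℝ)
    (hex : ∃ p p' : ℝ, p ≠ p' ∧
      Measure.map (fun ω => h (W ω + μY * p)) μ =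
        Measure.map (fun ω => h (W ω + μY * p')) μ) :
    μY = 0 := by
  obtain ⟨p, p', hpp', hlaw⟩ := hex
  have hh : MeasurableEmbedding h := by
    rcases hmono with hm | hm
    · exact hm.monotone.measurable.measurableEmbedding hm.injective
    · exact hm.antitone.measurable.measurableEmbedding hm.injective
  have := Measure.isProbabilityMeasure_map (μ := μ) hW.aemeasurable
  have hshift : (μ.map W).map (· + μY * p) = (μ.map W).map (· + μY * p') := by
    refine hh.map_injective ?_
    rwa [Measure.map_map (measurable_add_const _) hW, Measure.map_map (measurable_add_const _) hW,
      Measure.map_map hh.measurable (by fun_prop), Measure.map_map hh.measurable (by fun_prop)]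
  by_contra hμY
  exact hpp' (mul_left_cancel₀ hμY (eq_of_map_add_const_eq hshift))
end

section
/- Incompatibility of equalized odds and calibration (impossibility result of §3.3). Let a, b, c, d and a', b', c', d' be strictly positive reals, the confusion-table entries of a predictor for two demographic groups. If the two groups have equal false positive rates (b/(a+b) = b'/(a'+b')), equal false negative rates (c/(c+d) = c'/(c'+d')), and equal positive predictive values (d/(b+d) = d'/(b'+d')), then the base rates of the two groups are equal: (c+d)/(a+b+c+d) = (c'+d')/(a'+b'+c'+d'). -/
/-- Incompatibility of equalized odds and calibration (impossibility result of §3.3).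
If two groups with strictly positive confusion-table entries have equal false positive
rates, equal false negative rates, and equal positive predictive values, then their
base rates are equal. -/
theorem equalized_odds_and_calibration_force_equal_base_rates
    (a b c d a' b' c' d' : ℝ)
    (ha : 0 < a) (hb : 0 < b) (hc : 0 < c) (hd : 0 < d)
    (ha' : 0 < a') (hb' : 0 < b') (hc' : 0 < c') (hd' : 0 < d')
    (hFPR : b / (a + b) = b' / (a' + b'))
    (hFNR : c / (c + d) = c' / (c' + d'))
    (hPPV : d / (b + d) = d' / (b' + d')) :
    (c + d) / (a + b + c + d) = (c' + d') / (a' + b' + c' + d') := by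
  rw [div_eq_div_iff (by positivity) (by positivity)] at hFPR hFNR hPPV ⊢
  have e1 : b * a' = a * b' := by linear_combination hFPR
  have e2 : c * d' = d * c' := by linear_combination hFNR
  have e3 : d * b' = b * d' := by linear_combination hPPV
  have key : ((c + d) * (a' + b' + c' + d') - (c' + d') * (a + b + c + d)) * (b * d) = 0 := by
    linear_combination (c*d + d*d) * e1 + (a*b + b*b) * e2 + (a*c + c*b + a*d + b*d) * e3
  have hbd : b * d ≠ 0 := by positivity
  rcases mul_eq_zero.mp key with h | h
  · linarith
  · exact absurd h hbd
end

section
/- Proposition (failure of non-exploring sequential learning). In the abstract sequential policy learning setup, suppose W 0 is constantly equal to W₀ with W* ⊆ W₀ and W* ≠ W₀, and suppose that for every t the event E_t := {ω | ¬(W t ω ⊆ W (t+1) ω)} (the update at step t is exploring) is measurable with ℙ(E_t) ≤ δ_t, and that the event {ω | W T ω = W*} is measurable. Then for every T ∈ ℕ, ℙ(W T = W*) ≤ Σ_{t=0}^{T−1} δ_t; equivalently, ℙ(W T ≠ W*) ≥ 1 − Σ_{t=0}^{T−1} δ_t. -/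
open MeasureTheory
open scoped ENNReal

/-! A run that never explores can only grow its negative-decision region, so it stays a
superset of `W₀` and cannot end at the strictly smaller `W*`. Hence `W T = W*` forces an
exploring update at some step `t < T`, and a union bound over these steps gives the estimate. -/

theorem le_of_forall_lt_le_succ {α : Type*} [Preorder α] {s : ℕ → α} {T : ℕ}
    (h : ∀ t < T, s t ≤ s (t + 1)) : s 0 ≤ s T := by
  induction T with
  | zero => exact le_rfl
  | succ T ih => exact (ih fun t ht ↦ h t (ht.trans T.lt_succ_self)).trans (h T T.lt_succ_self)

theorem setOf_eq_subset_biUnion_not_subset_succ {Ω S : Type*} (W : ℕ → Ω → Set S)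
    {A B : Set S} (hW0 : ∀ ω, W 0 ω = A) (hAB : ¬ A ⊆ B) (T : ℕ) :
    {ω | W T ω = B} ⊆ ⋃ t ∈ Finset.range T, {ω | ¬ W t ω ⊆ W (t + 1) ω} := by
  intro ω hω
  by_contra hexplore
  simp only [Set.mem_iUnion, Finset.mem_range, Set.mem_ofPred_eq, not_exists, not_not]
    at hexplore
  have hmono : W 0 ω ⊆ W T ω := le_of_forall_lt_le_succ (s := (W · ω)) hexplore
  rw [hW0, show W T ω = B from hω] at hmono
  exact hAB hmono

theorem non_exploring_sequential_learning_fails_general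
    {Ω S : Type*} [MeasurableSpace Ω] (P : Measure Ω)
    (W : ℕ → Ω → Set S) (W₀ Wstar : Set S)
    (hW0 : ∀ ω, W 0 ω = W₀) (hsub : Wstar ⊆ W₀) (hne : Wstar ≠ W₀)
    (δ : ℕ → ℝ≥0∞)
    (hδ : ∀ t, P {ω | ¬ W t ω ⊆ W (t + 1) ω} ≤ δ t) :
    ∀ T : ℕ, P {ω | W T ω = Wstar} ≤ ∑ t ∈ Finset.range T, δ t := by
  intro T
  have hW₀ : ¬ W₀ ⊆ Wstar := fun h ↦ hne (hsub.antisymm h)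
  calc P {ω | W T ω = Wstar}
      ≤ P (⋃ t ∈ Finset.range T, {ω | ¬ W t ω ⊆ W (t + 1) ω}) :=
        measure_mono (setOf_eq_subset_biUnion_not_subset_succ W hW0 hW₀ T)
    _ ≤ ∑ t ∈ Finset.range T, P {ω | ¬ W t ω ⊆ W (t + 1) ω} := measure_biUnion_finset_le _ _
    _ ≤ ∑ t ∈ Finset.range T, δ t := Finset.sum_le_sum fun t _ ↦ hδ t

/-- Failure of non-exploring sequential learning (Proposition 7.2, Chapter 7).
Identifying deterministic policies with their negative-decision regions `W t ω ⊆ S`,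
if the initial region strictly contains the optimal region `W*` and the update at each
step `t` is exploring with probability at most `δ t`, then for every `T`,
`ℙ(W T = W*) ≤ Σ_{t<T} δ t`. -/
theorem non_exploring_sequential_learning_fails
    {Ω S : Type*} [MeasurableSpace Ω] (P : Measure Ω) [IsProbabilityMeasure P]
    (W : ℕ → Ω → Set S) (W₀ Wstar : Set S)
    (hW0 : ∀ ω, W 0 ω = W₀) (hsub : Wstar ⊆ W₀) (hne : Wstar ≠ W₀)
    (δ : ℕ → ℝ≥0∞)
    (hEmeas : ∀ t, MeasurableSet {ω | ¬ W t ω ⊆ W (t + 1) ω})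
    (hδ : ∀ t, P {ω | ¬ W t ω ⊆ W (t + 1) ω} ≤ δ t)
    (hTmeas : ∀ T, MeasurableSet {ω | W T ω = Wstar}) :
    ∀ T : ℕ, P {ω | W T ω = Wstar} ≤ ∑ t ∈ Finset.range T, δ t :=
  non_exploring_sequential_learning_fails_general P W W₀ Wstar hW0 hsub hne δ hδ
end

section
/- Corollary (error-based learners never recover the optimal policy). In the abstract sequential policy learning setup, suppose W 0 is constantly equal to W₀ with W* ⊆ W₀ and W* ≠ W₀, suppose that for every t the event E_t := {ω | ¬(W t ω ⊆ W (t+1) ω)} is measurable with ℙ(E_t) = 0, and that the event {ω | W T ω = W*} is measurable for each T. Then for every T ∈ ℕ, ℙ(W T = W*) = 0: with probability one the learned policy never equals the optimal policy. -/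
open MeasureTheory
open scoped ENNReal

/-- Error-based learners never recover the optimal policy (Corollary 7.3, Chapter 7).
Identifying deterministic policies with their negative-decision regions `W t ω ⊆ S`,
if the initial region strictly contains the optimal region `W*` and the update at each
step is exploring with probability zero, then for every `T`, `ℙ(W T = W*) = 0`. -/
theorem error_based_learner_never_optimal
    {Ω S : Type*} [MeasurableSpace Ω] (P : Measure Ω) [IsProbabilityMeasure P]
    (W : ℕ → Ω → Set S) (W₀ Wstar : Set S)
    (hW0 : ∀ ω, W 0 ω = W₀) (hsub : Wstar ⊆ W₀) (hne : Wstar ≠ W₀)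
    (hEmeas : ∀ t, MeasurableSet {ω | ¬ W t ω ⊆ W (t + 1) ω})
    (hzero : ∀ t, P {ω | ¬ W t ω ⊆ W (t + 1) ω} = 0)
    (hTmeas : ∀ T, MeasurableSet {ω | W T ω = Wstar}) :
    ∀ T : ℕ, P {ω | W T ω = Wstar} = 0 := by
  intro T
  have hN : P (⋃ t, {ω | ¬ W t ω ⊆ W (t + 1) ω}) = 0 :=
    measure_iUnion_null hzero
  refine measure_mono_null ?_ hN
  intro ω hω
  by_contra hmem
  simp only [Set.mem_iUnion, Set.mem_setOf_eq, not_exists, not_not] at hmem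
  have hmono : ∀ t, W 0 ω ⊆ W t ω := by
    intro t
    induction t with
    | zero => exact le_refl _
    | succ n ih => exact ih.trans (hmem n)
  have : W₀ ⊆ Wstar := by
    have := hmono T
    rw [hW0 ω] at this
    rwa [hω] at this
  exact hne (le_antisymm hsub this)
end
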